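/- For α ≥ 0, λ > 0, s ∈ (0, 3/2), define J by its Fourier transform Ĵ(p) = (sin(sπ/2)/(π(2π)^{3/2})) ∫₀^∞ t^{s/2−1} φ(t)/(|p|²+λ+t) dt, where φ(t) = (4πα+√λ)/(4πα+√(λ+t)). Then Ĵ ∈ L²(ℝ³); i.e. ∫_{ℝ³} |Ĵ(p)|² dp < ∞. -/

import Mathlib

open Real MeasureTheory Set

/-!
Write `M = ‖p‖² + λ`. For `0 ≤ θ ≤ 1` one has `1/(M + t) ≤ M^{-θ} (λ + t)^{θ-1}`, and
`φ(t) ≤ (4πα + √λ)(λ + t)^{-1/2}`, so the inner integral is at most `C M^{-θ}` with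
`C = ∫₀^∞ t^{s/2-1} φ(t) (λ + t)^{θ-1} dt`, which is finite once `θ < 3/2 - s/2`.
Since `s < 3/2` we may also take `θ > 3/4`, and then `(‖p‖² + λ)^{-θ}` is square integrable
on `ℝ³`.
-/

theorem integrableOn_Ioi_rpow_mul_add_rpow {a b c : ℝ} (ha : 0 < a) (hab : a + b < 0)
    (hc : 0 < c) : IntegrableOn (fun t : ℝ => t ^ (a - 1) * (c + t) ^ b) (Ioi 0) := by
  have hmeas : ∀ s : Set ℝ, AEStronglyMeasurable (fun t : ℝ => t ^ (a - 1) * (c + t) ^ b)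
      (volume.restrict s) := fun _ => by fun_prop
  rw [← Ioc_union_Ioi_eq_Ioi zero_le_one]
  refine IntegrableOn.union ?_ ?_
  · have hpow : IntegrableOn (fun t : ℝ => t ^ (a - 1)) (Ioc 0 1) :=
      (intervalIntegrable_iff_integrableOn_Ioc_of_le zero_le_one).1
        (intervalIntegral.intervalIntegrable_rpow' (by linarith))
    refine (hpow.mul_const (c ^ b)).mono' (hmeas _) ?_
    filter_upwards [self_mem_ae_restrict measurableSet_Ioc] with t ⟨ht, _⟩
    rw [norm_mul, norm_of_nonneg (by positivity), norm_of_nonneg (by positivity)]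
    exact mul_le_mul_of_nonneg_left
      (rpow_le_rpow_of_nonpos hc (by linarith) (by linarith)) (by positivity)
  · have hpow : IntegrableOn (fun t : ℝ => t ^ (a + b - 1)) (Ioi 1) :=
      integrableOn_Ioi_rpow_of_lt (by linarith) one_pos
    refine hpow.mono' (hmeas _) ?_
    filter_upwards [self_mem_ae_restrict measurableSet_Ioi] with t ht
    have ht0 : (0 : ℝ) < t := one_pos.trans ht
    rw [norm_mul, norm_of_nonneg (by positivity), norm_of_nonneg (by positivity),
      show a + b - 1 = (a - 1) + b by ring, rpow_add ht0]
    exact mul_le_mul_of_nonneg_left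
      (rpow_le_rpow_of_nonpos ht0 (by linarith) (by linarith)) (by positivity)

theorem integrable_rpow_neg_norm_sq_add {E : Type*} [NormedAddCommGroup E]
    [NormedSpace ℝ E] [FiniteDimensional ℝ E] [MeasurableSpace E] [BorelSpace E]
    {μ : Measure E} [μ.IsAddHaarMeasure] {c r : ℝ} (hc : 0 < c)
    (hr : (Module.finrank ℝ E : ℝ) < r) :
    Integrable (fun x : E => (‖x‖ ^ 2 + c) ^ (-r / 2)) μ := by
  have hr0 : 0 ≤ r := (Nat.cast_nonneg _).trans hr.le
  set m := min c 1
  have hm : 0 < m := lt_min hc one_pos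
  refine ((integrable_rpow_neg_one_add_norm_sq (μ := μ) hr).const_mul (m ^ (-r / 2))).mono'
    (by fun_prop : Measurable _).aestronglyMeasurable (ae_of_all _ fun x => ?_)
  have hlow : m * (1 + ‖x‖ ^ 2) ≤ ‖x‖ ^ 2 + c := by
    nlinarith [min_le_left c 1, min_le_right c 1, sq_nonneg ‖x‖]
  rw [norm_of_nonneg (by positivity), ← mul_rpow hm.le (by positivity)]
  exact rpow_le_rpow_of_nonpos (by positivity) hlow (by linarith)

theorem memLp_two_rpow_neg_norm_sq_add {E : Type*} [NormedAddCommGroup E]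
    [NormedSpace ℝ E] [FiniteDimensional ℝ E] [MeasurableSpace E] [BorelSpace E]
    {μ : Measure E} [μ.IsAddHaarMeasure] {c θ : ℝ} (hc : 0 < c)
    (hθ : (Module.finrank ℝ E : ℝ) < 4 * θ) :
    MemLp (fun x : E => (‖x‖ ^ 2 + c) ^ (-θ)) 2 μ := by
  refine (memLp_two_iff_integrable_sq (by fun_prop : Measurable _).aestronglyMeasurable).2 ?_
  refine (integrable_rpow_neg_norm_sq_add (μ := μ) hc hθ).congr (ae_of_all _ fun x => ?_)
  dsimp only
  rw [← rpow_mul_natCast (by positivity)]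
  congr 1
  push_cast
  ring

theorem inv_add_le_rpow_neg_mul_rpow {c M t θ : ℝ} (hc : 0 < c) (hcM : c ≤ M) (ht : 0 ≤ t)
    (hθ0 : 0 ≤ θ) (hθ1 : θ ≤ 1) : (M + t)⁻¹ ≤ M ^ (-θ) * (c + t) ^ (θ - 1) := by
  have hM : 0 < M := hc.trans_le hcM
  calc (M + t)⁻¹ = (M + t) ^ (-θ) * (M + t) ^ (θ - 1) := by
        rw [← rpow_add (by positivity), show -θ + (θ - 1) = -1 by ring, rpow_neg_one]
    _ ≤ M ^ (-θ) * (c + t) ^ (θ - 1) := by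
        gcongr ?_ * ?_
        · exact rpow_le_rpow_of_nonpos hM (by linarith) (by linarith)
        · exact rpow_le_rpow_of_nonpos (by positivity) (by linarith) (by linarith)

theorem norm_setIntegral_div_add_le {f : ℝ → ℝ} {c M θ : ℝ} (hc : 0 < c) (hcM : c ≤ M)
    (hθ0 : 0 ≤ θ) (hθ1 : θ ≤ 1)
    (hf : IntegrableOn (fun t => ‖f t‖ * (c + t) ^ (θ - 1)) (Ioi 0)) :
    ‖∫ t in Ioi 0, f t / (M + t)‖ ≤ M ^ (-θ) * ∫ t in Ioi 0, ‖f t‖ * (c + t) ^ (θ - 1) := by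
  rw [← integral_const_mul]
  refine norm_integral_le_of_norm_le (hf.const_mul _) ?_
  filter_upwards [self_mem_ae_restrict measurableSet_Ioi] with t (ht : 0 < t)
  rw [norm_div, norm_of_nonneg (show 0 ≤ M + t by linarith), div_eq_mul_inv, mul_left_comm]
  exact mul_le_mul_of_nonneg_left (inv_add_le_rpow_neg_mul_rpow hc hcM ht.le hθ0 hθ1)
    (norm_nonneg _)

theorem memLp_two_setIntegral_div_norm_sq_add {E : Type*} [NormedAddCommGroup E]
    [NormedSpace ℝ E] [FiniteDimensional ℝ E] [MeasurableSpace E] [BorelSpace E]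
    {μ : Measure E} [μ.IsAddHaarMeasure] {f : ℝ → ℝ} {c θ : ℝ} (hf_meas : Measurable f)
    (hc : 0 < c) (hθ : (Module.finrank ℝ E : ℝ) < 4 * θ) (hθ1 : θ ≤ 1)
    (hf : IntegrableOn (fun t => ‖f t‖ * (c + t) ^ (θ - 1)) (Ioi 0)) :
    MemLp (fun x : E => ∫ t in Ioi 0, f t / (‖x‖ ^ 2 + c + t)) 2 μ := by
  have hθ0 : 0 ≤ θ := by linarith [(Nat.cast_nonneg (Module.finrank ℝ E) : (0 : ℝ) ≤ _)]
  have hmeas : AEStronglyMeasurable (fun x : E => ∫ t in Ioi 0, f t / (‖x‖ ^ 2 + c + t)) μ :=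
    (Measurable.stronglyMeasurable (f := Function.uncurry fun (x : E) (t : ℝ) =>
      f t / (‖x‖ ^ 2 + c + t)) (by fun_prop)).integral_prod_right.aestronglyMeasurable
  refine ((memLp_two_rpow_neg_norm_sq_add hc hθ).const_mul
    (∫ t in Ioi 0, ‖f t‖ * (c + t) ^ (θ - 1))).of_le hmeas (ae_of_all _ fun x => ?_)
  refine (norm_setIntegral_div_add_le hc (by nlinarith [sq_nonneg ‖x‖]) hθ0 hθ1 hf).trans ?_
  rw [mul_comm]
  exact le_norm_self _

theorem div_add_sqrt_le_mul_rpow_neg_half {A K u : ℝ} (hA : 0 ≤ A) (hK : 0 ≤ K) (hu : 0 < u) :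
    K / (A + √u) ≤ K * u ^ (-(1 / 2) : ℝ) := by
  rw [rpow_neg hu.le, ← sqrt_eq_rpow, ← div_eq_mul_inv]
  exact div_le_div_of_nonneg_left hK (sqrt_pos.2 hu) (le_add_of_nonneg_left hA)

theorem integrableOn_Ioi_norm_rpow_mul_div_add_sqrt_mul_rpow {A K a c θ : ℝ} (hA : 0 ≤ A)
    (hK : 0 ≤ K) (hc : 0 < c) (ha : 0 < a) (haθ : a + θ < 3 / 2) :
    IntegrableOn (fun t : ℝ => ‖t ^ (a - 1) * (K / (A + √(c + t)))‖ * (c + t) ^ (θ - 1))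
      (Ioi 0) := by
  refine ((integrableOn_Ioi_rpow_mul_add_rpow (b := θ - 3 / 2) ha (by linarith) hc).const_mul
    K).mono' (by fun_prop) ?_
  filter_upwards [self_mem_ae_restrict measurableSet_Ioi] with t (ht : 0 < t)
  have hct : 0 < c + t := by linarith
  rw [norm_mul, norm_norm, norm_mul, norm_of_nonneg (by positivity),
    norm_of_nonneg (by positivity), norm_of_nonneg (by positivity)]
  calc t ^ (a - 1) * (K / (A + √(c + t))) * (c + t) ^ (θ - 1)
      ≤ t ^ (a - 1) * (K * (c + t) ^ (-(1 / 2) : ℝ)) * (c + t) ^ (θ - 1) := by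
        gcongr
        exact div_add_sqrt_le_mul_rpow_neg_half hA hK hct
    _ = K * (t ^ (a - 1) * (c + t) ^ (θ - 3 / 2)) := by
        rw [show θ - 3 / 2 = -(1 / 2) + (θ - 1) by ring, rpow_add hct]
        ring

/-- For `s ∈ (0,3/2)`, the function `Ĵ(p) = (sin(sπ/2)/(π(2π)^{3/2})) ∫₀^∞
t^{s/2-1} φ(t)/(|p|²+λ+t) dt`, with `φ(t) = (4πα+√λ)/(4πα+√(λ+t))`, is in `L²(ℝ³)`. -/
theorem Jhat_memL2 (α lam s : ℝ) (hα : 0 ≤ α) (hlam : 0 < lam)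
    (hs : s ∈ Set.Ioo (0:ℝ) (3/2)) :
    MemLp (fun p : EuclideanSpace ℝ (Fin 3) =>
        (Real.sin (s * π / 2) / (π * (2 * π) ^ ((3:ℝ) / 2))) *
          ∫ t in Set.Ioi (0:ℝ),
            t ^ (s / 2 - 1) *
              ((4 * π * α + Real.sqrt lam) / (4 * π * α + Real.sqrt (lam + t)))
              / (‖p‖ ^ 2 + lam + t)) 2 volume := by
  obtain ⟨hs0, hs32⟩ := hs
  -- the midpoint of `3/4` and `3/2 - s/2`, capped at `1`
  set θ := min 1 (9 / 8 - s / 4)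
  have hθ1 : θ ≤ 1 := min_le_left _ _
  have hθs : θ ≤ 9 / 8 - s / 4 := min_le_right _ _
  have hdim : (Module.finrank ℝ (EuclideanSpace ℝ (Fin 3)) : ℝ) < 4 * θ := by
    have : 3 / 4 < θ := lt_min (by norm_num) (by linarith)
    rw [finrank_euclideanSpace_fin]
    push_cast
    linarith
  have hweighted := integrableOn_Ioi_norm_rpow_mul_div_add_sqrt_mul_rpow (a := s / 2) (θ := θ)
    (by positivity : 0 ≤ 4 * π * α) (by positivity : 0 ≤ 4 * π * α + √lam) hlam
    (by linarith) (by linarith)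
  exact (memLp_two_setIntegral_div_norm_sq_add (by fun_prop) hlam hdim hθ1 hweighted).const_mul _
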